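/- For the two-state chain with r = 1 - p - q, every real t with |t| < 1, and every integer k ≥ 1, the generating functions satisfy G_0(t,k) = (1 - p - r t) q^{-1} G_1(t,k). -/

import Mathlib

/-!
Conditioning on the first step gives, for every `k`,
`G_i(t,k+1) = P i 0 * G_0(t,k) + P i 1 * t * G_1(t,k+1)`,
where all series converge for `|t| < 1` because `0 ≤ g_i(n,k) ≤ 1` (the path weights of a
stochastic matrix sum to one). The instance `i = 1` expresses `G_0(t,k)` through
`G_1(t,k+1)`, and substituting this into the instance `i = 0` gives the claim.
-/

open Matrix Finset

/-- Transition matrix of the two-state chain with parameters `p`, `q`. -/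
noncomputable def twoStateP (p q : ℝ) : Matrix (Fin 2) (Fin 2) ℝ :=
  !![1 - p, p; q, 1 - q]

/-- `g2 p q i n k` is the probability that the two-state chain started at `i`
spends exactly `k` of the times `1,…,n` in state `0`. -/
noncomputable def g2 (p q : ℝ) (i : Fin 2) (n k : ℕ) : ℝ :=
  ∑ x ∈ Finset.univ.filter
      (fun x : Fin (n + 1) → Fin 2 => x 0 = i ∧
        (Finset.univ.filter (fun m : Fin n => x m.succ = 0)).card = k),
    ∏ m : Fin n, twoStateP p q (x m.castSucc) (x m.succ)

section Paths

variable {S R : Type*}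

theorem sum_filter_apply_zero_eq_sum_cons [Fintype S] [DecidableEq S] [AddCommMonoid R]
    {n : ℕ} (i : S) (F : (Fin (n + 1) → S) → R) :
    ∑ x ∈ univ.filter (fun x : Fin (n + 1) → S => x 0 = i), F x =
      ∑ y : Fin n → S, F (Fin.cons i y) := by
  rw [sum_filter, ← (Fin.consEquiv fun _ => S).sum_comp, Fintype.sum_prod_type]
  simp [Fin.consEquiv]

variable [CommSemiring R] (P : Matrix S S R)

def pathWeight {n : ℕ} (x : Fin (n + 1) → S) : R :=
  ∏ m : Fin n, P (x m.castSucc) (x m.succ)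

theorem pathWeight_cons {n : ℕ} (i : S) (y : Fin (n + 1) → S) :
    pathWeight P (Fin.cons i y) = P i (y 0) * pathWeight P y := by
  simp only [pathWeight, Fin.prod_univ_succ, ← Fin.succ_castSucc, Fin.castSucc_zero,
    Fin.cons_zero, Fin.cons_succ]

theorem sum_pathWeight_eq_one [Fintype S] [DecidableEq S] (hP : ∀ i, ∑ j, P i j = 1)
    (n : ℕ) (i : S) :
    ∑ x ∈ univ.filter (fun x : Fin (n + 1) → S => x 0 = i), pathWeight P x = 1 := by
  rw [sum_filter_apply_zero_eq_sum_cons]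
  induction n generalizing i with
  | zero => simp [pathWeight]
  | succ n ih =>
    rw [← hP i, ← sum_fiberwise univ (fun y => y 0)]
    refine sum_congr rfl fun j _ => ?_
    rw [← mul_one (P i j), ← ih j, sum_filter_apply_zero_eq_sum_cons, mul_sum]
    simp [pathWeight_cons]

end Paths

section TwoState

variable {p q : ℝ}

theorem twoStateP_nonneg (hp : p ∈ Set.Icc (0 : ℝ) 1) (hq : q ∈ Set.Icc (0 : ℝ) 1)
    (a b : Fin 2) : 0 ≤ twoStateP p q a b := by
  obtain ⟨hp₀, hp₁⟩ := hp
  obtain ⟨hq₀, hq₁⟩ := hq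
  fin_cases a <;> fin_cases b <;> simp [twoStateP] <;> linarith

theorem sum_twoStateP (p q : ℝ) (i : Fin 2) : ∑ j, twoStateP p q i j = 1 := by
  fin_cases i <;> simp [twoStateP]

theorem g2_eq_sum_pathWeight (p q : ℝ) (i : Fin 2) (n k : ℕ) :
    g2 p q i n k = ∑ x ∈ univ.filter (fun x : Fin (n + 1) → Fin 2 => x 0 = i),
      if #{m : Fin n | x m.succ = 0} = k then pathWeight (twoStateP p q) x else 0 := by
  rw [g2, ← filter_filter, sum_filter]
  rfl

theorem g2_nonneg (hp : p ∈ Set.Icc (0 : ℝ) 1) (hq : q ∈ Set.Icc (0 : ℝ) 1)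
    (i : Fin 2) (n k : ℕ) : 0 ≤ g2 p q i n k :=
  sum_nonneg fun _ _ => prod_nonneg fun _ _ => twoStateP_nonneg hp hq _ _

theorem g2_le_one (hp : p ∈ Set.Icc (0 : ℝ) 1) (hq : q ∈ Set.Icc (0 : ℝ) 1)
    (i : Fin 2) (n k : ℕ) : g2 p q i n k ≤ 1 := by
  rw [g2_eq_sum_pathWeight, ← sum_pathWeight_eq_one _ (sum_twoStateP p q) n i]
  refine sum_le_sum fun x _ => ?_
  split_ifs
  · rfl
  · exact prod_nonneg fun _ _ => twoStateP_nonneg hp hq _ _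

theorem g2_eq_zero_of_lt (p q : ℝ) (i : Fin 2) {n k : ℕ} (h : n < k) : g2 p q i n k = 0 := by
  refine sum_eq_zero fun x hx => absurd (mem_filter.mp hx).2.2 (ne_of_lt ?_)
  exact (card_filter_le _ _).trans_lt (by simpa using h)

theorem g2_succ_succ (p q : ℝ) (i : Fin 2) (n k : ℕ) :
    g2 p q i (n + 1) (k + 1) =
      twoStateP p q i 0 * g2 p q 0 n k + twoStateP p q i 1 * g2 p q 1 n (k + 1) := by
  rw [g2_eq_sum_pathWeight, sum_filter_apply_zero_eq_sum_cons,
    ← sum_fiberwise univ (fun y => y 0), Fin.sum_univ_two, g2_eq_sum_pathWeight,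
    g2_eq_sum_pathWeight, mul_sum, mul_sum]
  -- the occupancy of `Fin.cons i y` is that of `y`'s tail plus one if `y 0 = 0`
  congr 1 <;> refine sum_congr rfl fun y hy => ?_ <;>
    simp only [Fin.cons_succ, pathWeight_cons, (mem_filter.mp hy).2, Fin.card_filter_univ_succ']
    <;> split_ifs <;> first | omega | simp

end TwoState

/-- The paper's `G_i(t, k)`. -/
noncomputable def occupancyGF (p q : ℝ) (i : Fin 2) (t : ℝ) (k : ℕ) : ℝ :=
  ∑' n : ℕ, g2 p q i (n + k) k * t ^ n

section GeneratingFunction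

variable {p q t : ℝ} (hp : p ∈ Set.Icc (0 : ℝ) 1) (hq : q ∈ Set.Icc (0 : ℝ) 1) (ht : |t| < 1)
include hp hq ht

theorem summable_g2_mul_pow (i : Fin 2) (m k : ℕ) :
    Summable fun n : ℕ => g2 p q i (n + m) k * t ^ n := by
  refine .of_norm_bounded (summable_geometric_of_lt_one (abs_nonneg t) ht) fun n => ?_
  rw [norm_mul, norm_pow, Real.norm_eq_abs, Real.norm_eq_abs,
    abs_of_nonneg (g2_nonneg hp hq i _ k)]
  exact mul_le_of_le_one_left (by positivity) (g2_le_one hp hq i _ k)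

theorem tsum_g2_mul_pow_eq_mul_occupancyGF (i : Fin 2) (k : ℕ) :
    ∑' n : ℕ, g2 p q i (n + k) (k + 1) * t ^ n = t * occupancyGF p q i t (k + 1) := by
  rw [(summable_g2_mul_pow hp hq ht i k (k + 1)).tsum_eq_zero_add,
    g2_eq_zero_of_lt p q i (by omega), zero_mul, zero_add, occupancyGF, ← tsum_mul_left]
  refine tsum_congr fun n => ?_
  rw [Nat.add_right_comm n 1 k, add_assoc, pow_succ]
  ring

theorem occupancyGF_succ (i : Fin 2) (k : ℕ) :
    occupancyGF p q i t (k + 1) = twoStateP p q i 0 * occupancyGF p q 0 t k +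
      twoStateP p q i 1 * (t * occupancyGF p q 1 t (k + 1)) := by
  rw [← tsum_g2_mul_pow_eq_mul_occupancyGF hp hq ht, occupancyGF, occupancyGF,
    ← tsum_mul_left, ← tsum_mul_left,
    ← ((summable_g2_mul_pow hp hq ht 0 k k).mul_left _).tsum_add
      ((summable_g2_mul_pow hp hq ht 1 k (k + 1)).mul_left _)]
  refine tsum_congr fun n => ?_
  rw [← add_assoc, g2_succ_succ]
  ring

end GeneratingFunction

theorem stmt13 (p q : ℝ) (hp : p ∈ Set.Ioo (0 : ℝ) 1) (hq : q ∈ Set.Ioo (0 : ℝ) 1)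
    (r : ℝ) (hr : r = 1 - p - q) (t : ℝ) (ht : |t| < 1) (k : ℕ) (hk : 1 ≤ k) :
    (∑' n : ℕ, g2 p q 0 (n + k) k * t ^ n) =
      (1 - p - r * t) * q⁻¹ * ∑' n : ℕ, g2 p q 1 (n + k) k * t ^ n := by
  obtain ⟨k, rfl⟩ := Nat.exists_eq_add_of_le' hk
  change occupancyGF p q 0 t (k + 1) = (1 - p - r * t) * q⁻¹ * occupancyGF p q 1 t (k + 1)
  have hp' := Set.Ioo_subset_Icc_self hp
  have hq' := Set.Ioo_subset_Icc_self hq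
  have h₀ := occupancyGF_succ hp' hq' ht 0 k
  have h₁ := occupancyGF_succ hp' hq' ht 1 k
  simp only [twoStateP, of_apply, cons_val', cons_val_zero, cons_val_one, empty_val',
    cons_val_fin_one] at h₀ h₁
  have hq₀ : q ≠ 0 := hq.1.ne'
  subst hr
  field_simp
  linear_combination q * h₀ - (1 - p) * h₁
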